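/- arXiv:2003.07987 — 8 statements merged into one kernel-verified Lean document; each statement's English description precedes it below -/
import Mathlib

section
/- Maximum principle: if V is nonnegative and not identically zero on M = (Z/KZ)^d, and f ∈ ℓ²(M) satisfies (Hf)_n ≥ 0 for all n ∈ M, then f_n ≥ 0 for all n ∈ M. -/
/-! If `f` is somewhere negative, take a point where it attains its (negative) minimum. There
every second difference `2 f n - f (n + e i) - f (n - e i)` is `≤ 0`, and so is `v n f n`;
since their sum `(Hf)_n` is `≥ 0`, all of them vanish, so the minimum propagates to the
neighbours `n + e i`. The basis vectors generate the torus as a monoid, hence `f` is constant,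
and then `(Hf)_p = v_p f_p < 0` at a point where `v_p > 0`. -/

open Finset Real

noncomputable section

/-- The `i`-th standard basis vector in the discrete torus `(ZMod K)^d`. -/
def e (d K : ℕ) (i : Fin d) : Fin d → ZMod K :=
  fun j => if j = i then 1 else 0

/-- The periodic discrete Schrödinger operator `H = -Δ + V` on `(ZMod K)^d`:
`(Hφ)_n = -∑_{|m-n|₁=1}(φ_m - φ_n) + v_n φ_n`. -/
def opH (d K : ℕ) (v φ : (Fin d → ZMod K) → ℝ) (n : Fin d → ZMod K) : ℝ :=
  (∑ i : Fin d, (2 * φ n - φ (n + e d K i) - φ (n - e d K i))) + v n * φ n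

theorem e_eq_single (d K : ℕ) (i : Fin d) : e d K i = Pi.single i 1 := by
  funext j
  simp [e, Pi.single_apply]

theorem closure_range_e (d K : ℕ) [NeZero K] :
    AddSubmonoid.closure (Set.range (e d K)) = ⊤ := by
  refine eq_top_iff.2 fun x _ => ?_
  have hx : x = ∑ j, (x j).val • e d K j := by
    simp only [e_eq_single, ← Pi.single_smul, nsmul_eq_mul, mul_one, ZMod.natCast_zmod_val]
    exact (Finset.univ_sum_single x).symm
  rw [hx]
  exact AddSubmonoid.sum_mem _ fun j _ =>
    AddSubmonoid.nsmul_mem _ (AddSubmonoid.subset_closure (Set.mem_range_self j)) _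

theorem opH_const (d K : ℕ) (v : (Fin d → ZMod K) → ℝ) (c : ℝ) (n : Fin d → ZMod K) :
    opH d K v (fun _ => c) n = v n * c := by
  simp only [opH, sub_self, two_mul, add_sub_cancel_right, sum_const_zero, zero_add]

theorem apply_add_e_eq_of_isMin (d K : ℕ) {v f : (Fin d → ZMod K) → ℝ} {n : Fin d → ZMod K}
    (hv : 0 ≤ v n) (hmin : ∀ x, f n ≤ f x) (hneg : f n ≤ 0) (hH : 0 ≤ opH d K v f n)
    (i : Fin d) : f (n + e d K i) = f n := by
  have hterm : ∀ j ∈ univ, 2 * f n - f (n + e d K j) - f (n - e d K j) ≤ 0 := fun j _ => by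
    linarith [hmin (n + e d K j), hmin (n - e d K j)]
  have hpot : v n * f n ≤ 0 := mul_nonpos_of_nonneg_of_nonpos hv hneg
  have hsum : ∑ j, (2 * f n - f (n + e d K j) - f (n - e d K j)) = 0 :=
    le_antisymm (sum_nonpos hterm) (by rw [opH] at hH; linarith)
  have hi := (sum_eq_zero_iff_of_nonpos hterm).1 hsum i (mem_univ i)
  linarith [hmin (n + e d K i), hmin (n - e d K i)]

theorem eq_of_isMin_of_opH_nonneg (d K : ℕ) [NeZero K] {v f : (Fin d → ZMod K) → ℝ}
    {m : Fin d → ZMod K} (hv : ∀ n, 0 ≤ v n) (hf : ∀ n, 0 ≤ opH d K v f n)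
    (hmin : ∀ x, f m ≤ f x) (hneg : f m ≤ 0) (x : Fin d → ZMod K) : f x = f m := by
  suffices h : f (m + (x - m)) = f m by rwa [add_sub_cancel] at h
  induction x - m using AddSubmonoid.induction_of_closure_eq_top_right (closure_range_e d K) with
  | zero => rw [add_zero]
  | add_right y _ hy ih =>
    obtain ⟨i, rfl⟩ := hy
    rw [← add_assoc, ← ih]
    exact apply_add_e_eq_of_isMin d K (hv _) (ih ▸ hmin) (ih ▸ hneg) (hf _) i

/-- Maximum principle: if `V ≥ 0` is not identically zero and `(Hf)_n ≥ 0`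
for all `n`, then `f_n ≥ 0` for all `n`. -/
theorem maximum_principle (d K : ℕ) [NeZero K] (v : (Fin d → ZMod K) → ℝ)
    (hv : ∀ n, 0 ≤ v n) (hv0 : ∃ n, v n ≠ 0)
    (f : (Fin d → ZMod K) → ℝ) (hf : ∀ n, 0 ≤ opH d K v f n) :
    ∀ n, 0 ≤ f n := by
  by_contra! ⟨n₀, hn₀⟩
  obtain ⟨m, hmin⟩ := Finite.exists_min f
  have hneg : f m < 0 := (hmin n₀).trans_lt hn₀
  have hconst : f = fun _ => f m :=
    funext (eq_of_isMin_of_opH_nonneg d K hv hf hmin hneg.le)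
  obtain ⟨p, hp⟩ := hv0
  have hHp := hf p
  rw [hconst, opH_const] at hHp
  exact (mul_neg_of_pos_of_neg ((hv p).lt_of_ne' hp) hneg).not_ge hHp
end
end

section
/- If 0 ≤ v_n ≤ V_max for all n with V not identically zero, and u solves (Hu)_n = 1 on M = (Z/KZ)^d, then u_n ≥ 1/V_max for all n ∈ M; in particular u is strictly positive. -/
/-!
Minimum principle: at a global minimum `m` of `u` every second difference
`2 u_m - u_{m+e} - u_{m-e}` is nonpositive, so `Hu = 1` forces `v_m u_m ≥ 1`. With
`0 ≤ v_m ≤ V_max` this gives `u_m ≥ 1 / V_max`, and `u_m` bounds `u` from below.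
-/

open Finset Real

noncomputable section

theorem sum_second_difference_nonpos_of_forall_le {G ι : Type*} [AddGroup G]
    {φ : G → ℝ} {m : G} (hm : ∀ x, φ m ≤ φ x) (s : Finset ι) (a : ι → G) :
    ∑ i ∈ s, (2 * φ m - φ (m + a i) - φ (m - a i)) ≤ 0 :=
  Finset.sum_nonpos fun i _ => by linarith [hm (m + a i), hm (m - a i)]

theorem one_le_mul_of_opH_eq_one_of_forall_le {d K : ℕ} {v u : (Fin d → ZMod K) → ℝ}
    {m : Fin d → ZMod K} (hum : opH d K v u m = 1) (hm : ∀ x, u m ≤ u x) :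
    1 ≤ v m * u m := by
  have hlap := sum_second_difference_nonpos_of_forall_le hm univ (e d K)
  unfold opH at hum
  linarith

theorem one_div_le_of_one_le_mul {a b x : ℝ} (ha : 0 ≤ a) (hab : a ≤ b) (h : 1 ≤ a * x) :
    1 / b ≤ x := by
  have hx : 0 < x := pos_of_mul_pos_right (by linarith) ha
  have hb : 0 < b := lt_of_lt_of_le (pos_of_mul_pos_left (by linarith) hx.le) hab
  rw [div_le_iff₀ hb, mul_comm]
  exact h.trans (mul_le_mul_of_nonneg_right hab hx.le)

theorem landscape_lower_bound_general (d K : ℕ) [NeZero K] (Vmax : ℝ)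
    (v : (Fin d → ZMod K) → ℝ) (hv : ∀ n, 0 ≤ v n ∧ v n ≤ Vmax)
    (u : (Fin d → ZMod K) → ℝ) (hu : ∀ n, opH d K v u n = 1) :
    ∀ n, 1 / Vmax ≤ u n := by
  obtain ⟨m, hm⟩ := Finite.exists_min u
  have hvu : 1 ≤ v m * u m := one_le_mul_of_opH_eq_one_of_forall_le (hu m) hm
  intro n
  exact (one_div_le_of_one_le_mul (hv m).1 (hv m).2 hvu).trans (hm n)

/-- If `0 ≤ v_n ≤ V_max`, `v` not identically zero, and `Hu = 1`, then
`u_n ≥ 1/V_max > 0` for all `n`. -/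
theorem landscape_lower_bound (d K : ℕ) [NeZero K] (Vmax : ℝ) (hVmax : 0 < Vmax)
    (v : (Fin d → ZMod K) → ℝ) (hv : ∀ n, 0 ≤ v n ∧ v n ≤ Vmax)
    (hv0 : ∃ n, v n ≠ 0)
    (u : (Fin d → ZMod K) → ℝ) (hu : ∀ n, opH d K v u n = 1) :
    ∀ n, 1 / Vmax ≤ u n :=
  landscape_lower_bound_general d K Vmax v hv u hu
end
end

section
/- Landscape uncertainty principle: let u solve (Hu)_n = 1 on M = (Z/KZ)^d. Then for all f, g ∈ ℓ²(M), ⟨g, Hf⟩ = Σ_{n∈M} Σ_{i=1}^d u_{n+e_i} u_n (g_{n+e_i}/u_{n+e_i} - g_n/u_n)(f_{n+e_i}/u_{n+e_i} - f_n/u_n) + Σ_{n∈M} (1/u_n) g_n f_n. -/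
/-!
Summation by parts turns `⟨g, (-Δ) f⟩` into the Dirichlet form `∑ (∇g)(∇f)`. Writing `g = u ψ`,
`f = u φ`, the pointwise identity
`(a p - b q)(a r - b s) = a b (p - q)(r - s) + (a - b)(a p r - b q s)`
splits the Dirichlet form into the weighted form of `ψ, φ` plus the Dirichlet form of `u` against
`u ψ φ`; summing the latter by parts once more gives `∑ u ψ φ (-Δ u)`. Since `-Δ u = 1 - v u`, this
cancels the potential term and leaves exactly `∑ g f / u`.
-/

open Finset Real

noncomputable section

namespace Landscape

variable {G ι R : Type*} [AddCommGroup G] [Fintype G] [Fintype ι] [CommRing R] (c : ι → G)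

/-- The sign is that of `-Δ`, the positive operator. -/
def negLaplacian (φ : G → R) (n : G) : R :=
  ∑ i, (2 * φ n - φ (n + c i) - φ (n - c i))

def dirichletForm (g f : G → R) : R :=
  ∑ n, ∑ i, (g (n + c i) - g n) * (f (n + c i) - f n)

theorem sum_mul_negLaplacian (g f : G → R) :
    ∑ n, g n * negLaplacian c f n = dirichletForm c g f := by
  simp only [negLaplacian, dirichletForm, mul_sum]
  rw [sum_comm]
  conv_rhs => rw [sum_comm]
  refine sum_congr rfl fun i _ => ?_
  have shift_both : ∑ n, g (n + c i) * f (n + c i) = ∑ n, g n * f n :=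
    Equiv.sum_comp (Equiv.addRight (c i)) fun n => g n * f n
  have shift_left : ∑ n, g (n + c i) * f n = ∑ n, g n * f (n - c i) := by
    simpa using (Equiv.sum_comp (Equiv.subRight (c i)) fun n => g (n + c i) * f n).symm
  simp only [mul_sub, sub_mul, sum_sub_distrib, ← mul_sum, mul_left_comm (g _) 2]
  linear_combination shift_left - shift_both

/-- Ground-state representation of the Dirichlet form. -/
theorem dirichletForm_mul_mul (u ψ φ : G → R) :
    dirichletForm c (u * ψ) (u * φ) =
      (∑ n, ∑ i, u (n + c i) * u n * (ψ (n + c i) - ψ n) * (φ (n + c i) - φ n)) +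
        ∑ n, u n * ψ n * φ n * negLaplacian c u n := by
  have split : ∀ a b p q r s : R,
      (a * p - b * q) * (a * r - b * s) =
        a * b * (p - q) * (r - s) + (a * p * r - b * q * s) * (a - b) := by
    intros; ring
  rw [sum_mul_negLaplacian, dirichletForm, dirichletForm, ← sum_add_distrib]
  refine sum_congr rfl fun n _ => ?_
  rw [← sum_add_distrib]
  exact sum_congr rfl fun i _ => split ..

end Landscape

open Landscape

theorem landscape_uncertainty_general (d K : ℕ) [NeZero K] (v : (Fin d → ZMod K) → ℝ)
    (u : (Fin d → ZMod K) → ℝ) (hupos : ∀ n, 0 < u n)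
    (hu : ∀ n, opH d K v u n = 1)
    (f g : (Fin d → ZMod K) → ℝ) :
    ∑ n : Fin d → ZMod K, g n * opH d K v f n =
      (∑ n : Fin d → ZMod K, ∑ i : Fin d,
        u (n + e d K i) * u n *
          (g (n + e d K i) / u (n + e d K i) - g n / u n) *
          (f (n + e d K i) / u (n + e d K i) - f n / u n)) +
      ∑ n : Fin d → ZMod K, (1 / u n) * (g n * f n) := by
  have opH_eq : ∀ φ n, opH d K v φ n = negLaplacian (e d K) φ n + v n * φ n := fun _ _ => rfl
  have mul_div_u : ∀ φ : (Fin d → ZMod K) → ℝ, u * (φ / u) = φ := fun φ =>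
    funext fun n => mul_div_cancel₀ (φ n) (hupos n).ne'
  have negLaplacian_u : ∀ n, negLaplacian (e d K) u n = 1 - v n * u n := fun n => by
    linarith [hu n, opH_eq u n]
  simp only [opH_eq, mul_add, sum_add_distrib, sum_mul_negLaplacian]
  conv_lhs => rw [← mul_div_u g, ← mul_div_u f, dirichletForm_mul_mul]
  simp only [Pi.div_apply, mul_div_u]
  rw [add_assoc, ← sum_add_distrib]
  congr 1
  refine sum_congr rfl fun n _ => ?_
  rw [negLaplacian_u]
  field_simp [(hupos n).ne']
  ring

/-- Landscape uncertainty principle: if `Hu = 1` with `u > 0`, then for all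
`f, g`, `⟨g, Hf⟩` equals the conjugated form with effective potential `1/u`. -/
theorem landscape_uncertainty (d K : ℕ) [NeZero K] (v : (Fin d → ZMod K) → ℝ)
    (hv : ∀ n, 0 ≤ v n) (hv0 : ∃ n, v n ≠ 0)
    (u : (Fin d → ZMod K) → ℝ) (hupos : ∀ n, 0 < u n)
    (hu : ∀ n, opH d K v u n = 1)
    (f g : (Fin d → ZMod K) → ℝ) :
    ∑ n : Fin d → ZMod K, g n * opH d K v f n =
      (∑ n : Fin d → ZMod K, ∑ i : Fin d,
        u (n + e d K i) * u n *
          (g (n + e d K i) / u (n + e d K i) - g n / u n) *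
          (f (n + e d K i) / u (n + e d K i) - f n / u n)) +
      ∑ n : Fin d → ZMod K, (1 / u n) * (g n * f n) :=
  landscape_uncertainty_general d K v u hupos hu f g
end
end

section
/- Effective potential lower bound: if u solves (Hu)_n = 1 on M = (Z/KZ)^d, then for every f ∈ ℓ²(M), ⟨f, Hf⟩ ≥ Σ_{n∈M} f_n² / u_n. In particular, every eigenvalue μ of H satisfies μ ≥ min_{n∈M} (1/u_n). -/
open Finset Real

noncomputable section

/- Since `Hu = 1`, `∑ f²/u = ⟨f²/u, Hu⟩`. Summation by parts writes both this and `⟨f, Hf⟩` as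
sums over the edges of the torus plus the same potential term `∑ v f²`, and on an edge `(m, n)` the
discrete Picone inequality `(f_m²/u_m - f_n²/u_n)(u_m - u_n) ≤ (f_m - f_n)²` compares the two.
Testing with an eigenvector gives the eigenvalue bound. -/

theorem sq_div_sub_sq_div_mul_sub_le {x y : ℝ} (hx : 0 < x) (hy : 0 < y) (a b : ℝ) :
    (a ^ 2 / x - b ^ 2 / y) * (x - y) ≤ (a - b) ^ 2 := by
  rw [div_sub_div _ _ hx.ne' hy.ne', div_mul_eq_mul_div, div_le_iff₀ (mul_pos hx hy)]
  nlinarith [sq_nonneg (a * y - b * x), mul_pos hx hy]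

theorem sum_mul_two_mul_sub_sub_eq {G : Type*} [AddCommGroup G] [Fintype G] (c : G)
    (f g : G → ℝ) :
    ∑ n, g n * (2 * f n - f (n + c) - f (n - c)) =
      ∑ n, (g (n + c) - g n) * (f (n + c) - f n) := by
  have h_diag : ∑ n, g (n + c) * f (n + c) = ∑ n, g n * f n :=
    Equiv.sum_comp (Equiv.addRight c) fun n => g n * f n
  have h_shift : ∑ n, g (n + c) * f n = ∑ n, g n * f (n - c) := by
    rw [← Equiv.sum_comp (Equiv.subRight c)]
    simp only [Equiv.subRight_apply, sub_add_cancel]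
  simp only [mul_sub, sub_mul, two_mul, mul_add, sum_sub_distrib, sum_add_distrib]
  linarith

theorem sum_mul_opH {d K : ℕ} [NeZero K] (v f g : (Fin d → ZMod K) → ℝ) :
    ∑ n, g n * opH d K v f n =
      ∑ i, ∑ n, (g (n + e d K i) - g n) * (f (n + e d K i) - f n) + ∑ n, v n * g n * f n := by
  simp only [opH, mul_add, mul_sum, sum_add_distrib]
  rw [sum_comm]
  simp only [sum_mul_two_mul_sub_sub_eq, mul_left_comm (g _), mul_assoc]

theorem sum_sq_div_le_sum_mul_opH {d K : ℕ} [NeZero K] (v u : (Fin d → ZMod K) → ℝ)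
    (hupos : ∀ n, 0 < u n) (hu : ∀ n, opH d K v u n = 1) (f : (Fin d → ZMod K) → ℝ) :
    ∑ n, f n ^ 2 / u n ≤ ∑ n, f n * opH d K v f n := by
  calc ∑ n, f n ^ 2 / u n = ∑ n, f n ^ 2 / u n * opH d K v u n := by simp only [hu, mul_one]
    _ ≤ ∑ i, ∑ n, (f (n + e d K i) - f n) * (f (n + e d K i) - f n) + ∑ n, v n * f n * f n := by
      rw [sum_mul_opH]
      refine add_le_add (sum_le_sum fun i _ => sum_le_sum fun n _ => ?_)
        (sum_congr rfl fun n _ => ?_).le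
      · exact (sq_div_sub_sq_div_mul_sub_le (hupos _) (hupos n) _ _).trans_eq (sq _)
      · field_simp [(hupos n).ne']
    _ = ∑ n, f n * opH d K v f n := (sum_mul_opH v f f).symm

theorem inf'_one_div_le_of_sum_sq_div_le {ι : Type*} [Fintype ι] [Nonempty ι] (u φ : ι → ℝ)
    (hφ : φ ≠ 0) {μ : ℝ} (h : ∑ n, φ n ^ 2 / u n ≤ μ * ∑ n, φ n ^ 2) :
    univ.inf' univ_nonempty (fun n => 1 / u n) ≤ μ := by
  obtain ⟨n₀, hn₀⟩ := Function.ne_iff.mp hφ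
  have h_mass : 0 < ∑ n, φ n ^ 2 :=
    sum_pos' (fun n _ => sq_nonneg _) ⟨n₀, mem_univ _, sq_pos_of_ne_zero hn₀⟩
  have h_inf : univ.inf' univ_nonempty (fun n => 1 / u n) * ∑ n, φ n ^ 2 ≤ ∑ n, φ n ^ 2 / u n := by
    rw [mul_sum]
    refine sum_le_sum fun n _ => ?_
    rw [div_eq_inv_mul, ← one_div]
    exact mul_le_mul_of_nonneg_right (inf'_le _ (mem_univ n)) (sq_nonneg _)
  exact le_of_mul_le_mul_right (h_inf.trans h) h_mass

theorem effective_potential_bound_general (d K : ℕ) [NeZero K]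
    (v : (Fin d → ZMod K) → ℝ)
    (u : (Fin d → ZMod K) → ℝ) (hupos : ∀ n, 0 < u n)
    (hu : ∀ n, opH d K v u n = 1) :
    (∀ f : (Fin d → ZMod K) → ℝ,
        ∑ n : Fin d → ZMod K, (f n) ^ 2 / u n ≤
          ∑ n : Fin d → ZMod K, f n * opH d K v f n) ∧
      (∀ (μ : ℝ) (φ : (Fin d → ZMod K) → ℝ), φ ≠ 0 →
        (∀ n, opH d K v φ n = μ * φ n) →
        (Finset.univ.inf' Finset.univ_nonempty fun n : Fin d → ZMod K => 1 / u n)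
          ≤ μ) := by
  refine ⟨sum_sq_div_le_sum_mul_opH v u hupos hu, fun μ φ hφ hφμ => ?_⟩
  have h_rayleigh : ∑ n, φ n * opH d K v φ n = μ * ∑ n, φ n ^ 2 := by
    simp only [hφμ, mul_sum]
    exact sum_congr rfl fun n _ => by ring
  exact inf'_one_div_le_of_sum_sq_div_le u φ hφ
    ((sum_sq_div_le_sum_mul_opH v u hupos hu φ).trans_eq h_rayleigh)

/-- Effective potential lower bound: `⟨f, Hf⟩ ≥ ∑ f_n²/u_n`; in particular
every eigenvalue `μ` of `H` satisfies `μ ≥ min_n (1/u_n)`. -/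
theorem effective_potential_bound (d K : ℕ) [NeZero K]
    (v : (Fin d → ZMod K) → ℝ) (hv : ∀ n, 0 ≤ v n) (hv0 : ∃ n, v n ≠ 0)
    (u : (Fin d → ZMod K) → ℝ) (hupos : ∀ n, 0 < u n)
    (hu : ∀ n, opH d K v u n = 1) :
    (∀ f : (Fin d → ZMod K) → ℝ,
        ∑ n : Fin d → ZMod K, (f n) ^ 2 / u n ≤
          ∑ n : Fin d → ZMod K, f n * opH d K v f n) ∧
      (∀ (μ : ℝ) (φ : (Fin d → ZMod K) → ℝ), φ ≠ 0 →
        (∀ n, opH d K v φ n = μ * φ n) →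
        (Finset.univ.inf' Finset.univ_nonempty fun n : Fin d → ZMod K => 1 / u n)
          ≤ μ) :=
  effective_potential_bound_general d K v u hupos hu
end
end

section
/- Eigenfunction identity: if Hφ = μφ on ℓ²(M) and u solves Hu = 1, then for any g ∈ ℓ²(M), Σ_{n∈M}(1/u_n - μ) φ_n² g_n² + Σ_{n∈M} Σ_{i=1}^d u_{n+e_i} u_n (g_{n+e_i}φ_{n+e_i}/u_{n+e_i} - g_n φ_n/u_n)² = Σ_{n∈M} Σ_{i=1}^d φ_{n+e_i} φ_n (g_{n+e_i} - g_n)². -/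
/-! Both sides compute the quadratic form `Q(f) = ⟨f, H f⟩` at `f = gφ` by ground-state
representation: writing `f = w h` with `w` any function,
`Q(w h) = ∑ w_{n+e_i} w_n (h_{n+e_i} - h_n)² + ∑ (H w)_n w_n h_n²`.
With `w = φ, h = g` the potential term is `μ ∑ φ² g²`; with `w = u, h = gφ/u` it is `∑ φ² g² / u`.
Equating the two representations gives the identity. -/

open Finset

section Shift

variable {G : Type*} [AddCommGroup G] [Fintype G]

lemma sum_sq_shift_mul_sub_eq (w h : G → ℝ) (c : G) :
    ∑ n, (w (n + c) * h (n + c) - w n * h n) ^ 2 =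
      ∑ n, (w (n + c) * w n * (h (n + c) - h n) ^ 2 +
        (2 * w n - w (n + c) - w (n - c)) * w n * h n ^ 2) := by
  set F : G → ℝ := fun n => w n ^ 2 * h n ^ 2 - w (n - c) * w n * h n ^ 2
  have htelescope : ∑ n, (F (n + c) - F n) = 0 := by
    rw [sum_sub_distrib,
      Fintype.sum_equiv (Equiv.addRight c) (fun n => F (n + c)) F fun _ => rfl, sub_self]
  rw [← sub_eq_zero, ← sum_sub_distrib, ← htelescope]
  refine sum_congr rfl fun n _ => ?_
  simp only [F, add_sub_cancel_right]
  ring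

end Shift

/-- The quadratic form `⟨f, H f⟩` of `H = -Δ + V` on the discrete torus. -/
def energy (d K : ℕ) [NeZero K] (v f : (Fin d → ZMod K) → ℝ) : ℝ :=
  (∑ n, ∑ i, (f (n + e d K i) - f n) ^ 2) + ∑ n, v n * f n ^ 2

lemma energy_mul_eq (d K : ℕ) [NeZero K] (v w h : (Fin d → ZMod K) → ℝ) :
    energy d K v (fun n => w n * h n) =
      (∑ n, ∑ i, w (n + e d K i) * w n * (h (n + e d K i) - h n) ^ 2) +
        ∑ n, opH d K v w n * w n * h n ^ 2 := by
  have hgrad : (∑ n, ∑ i, (w (n + e d K i) * h (n + e d K i) - w n * h n) ^ 2) =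
      ∑ n, ∑ i, (w (n + e d K i) * w n * (h (n + e d K i) - h n) ^ 2 +
        (2 * w n - w (n + e d K i) - w (n - e d K i)) * w n * h n ^ 2) := by
    rw [sum_comm]
    conv_rhs => rw [sum_comm]
    exact sum_congr rfl fun i _ => sum_sq_shift_mul_sub_eq w h (e d K i)
  simp only [energy, opH, hgrad, sum_add_distrib, add_mul, sum_mul, add_assoc]
  congr 2
  refine sum_congr rfl fun n _ => ?_
  ring

theorem eigenfunction_identity_general (d K : ℕ) [NeZero K]
    (v : (Fin d → ZMod K) → ℝ)
    (u : (Fin d → ZMod K) → ℝ) (hupos : ∀ n, 0 < u n)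
    (hu : ∀ n, opH d K v u n = 1)
    (μ : ℝ) (φ : (Fin d → ZMod K) → ℝ)
    (heig : ∀ n, opH d K v φ n = μ * φ n)
    (g : (Fin d → ZMod K) → ℝ) :
    (∑ n : Fin d → ZMod K, (1 / u n - μ) * (φ n) ^ 2 * (g n) ^ 2) +
      (∑ n : Fin d → ZMod K, ∑ i : Fin d,
        u (n + e d K i) * u n *
          (g (n + e d K i) * φ (n + e d K i) / u (n + e d K i) -
            g n * φ n / u n) ^ 2) =
      ∑ n : Fin d → ZMod K, ∑ i : Fin d,
        φ (n + e d K i) * φ n * (g (n + e d K i) - g n) ^ 2 := by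
  have hu0 : ∀ n, u n ≠ 0 := fun n => (hupos n).ne'
  have hfactor : (fun n => u n * (g n * φ n / u n)) = fun n => φ n * g n := by
    funext n
    field_simp [hu0 n]
  have hviaφ := energy_mul_eq d K v φ g
  have hviau := energy_mul_eq d K v u (fun n => g n * φ n / u n)
  rw [hfactor] at hviau
  have hpotential : (∑ n, (1 / u n - μ) * φ n ^ 2 * g n ^ 2) =
      (∑ n, opH d K v u n * u n * (g n * φ n / u n) ^ 2) -
        ∑ n, opH d K v φ n * φ n * g n ^ 2 := by
    rw [← sum_sub_distrib]
    refine sum_congr rfl fun n _ => ?_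
    rw [hu, heig]
    field_simp [hu0 n]
  linarith

/-- Eigenfunction identity: if `Hφ = μφ` and `Hu = 1`, then for any `g`,
`∑(1/u - μ)φ²g² + ∑∑ u_{n+e_i}u_n (gφ/u)_{gradient}² = ∑∑ φ_{n+e_i}φ_n (∇g)²`. -/
theorem eigenfunction_identity (d K : ℕ) [NeZero K]
    (v : (Fin d → ZMod K) → ℝ) (hv : ∀ n, 0 ≤ v n) (hv0 : ∃ n, v n ≠ 0)
    (u : (Fin d → ZMod K) → ℝ) (hupos : ∀ n, 0 < u n)
    (hu : ∀ n, opH d K v u n = 1)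
    (μ : ℝ) (φ : (Fin d → ZMod K) → ℝ) (hφ : φ ≠ 0)
    (heig : ∀ n, opH d K v φ n = μ * φ n)
    (g : (Fin d → ZMod K) → ℝ) :
    (∑ n : Fin d → ZMod K, (1 / u n - μ) * (φ n) ^ 2 * (g n) ^ 2) +
      (∑ n : Fin d → ZMod K, ∑ i : Fin d,
        u (n + e d K i) * u n *
          (g (n + e d K i) * φ (n + e d K i) / u (n + e d K i) -
            g n * φ n / u n) ^ 2) =
      ∑ n : Fin d → ZMod K, ∑ i : Fin d,
        φ (n + e d K i) * φ n * (g (n + e d K i) - g n) ^ 2 :=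
  eigenfunction_identity_general d K v u hupos hu μ φ heig g
end

section
/- Caccioppoli-type inequality: if Hφ = μφ on ℓ²(M) and u solves Hu = 1, then for any g ∈ ℓ²(M), Σ_{n∈M} (1/u_n - μ) φ_n² g_n² ≤ (1/2) Σ_{n∈M} φ_n² Σ_{|m-n|_1=1} (g_m - g_n)². -/
open Finset Real

noncomputable section

/-! Ground state substitution: writing `φ²g² = u · (φ²g²/u)` and using `Hu = 1`, `Hφ = μφ`, the
left-hand side becomes a difference of two Dirichlet forms in which the potential cancels; each edge
term of that difference is then bounded by an exact sum-of-squares identity. -/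

lemma ground_state_edge_le (x y p q s t : ℝ) (hx : 0 < x) (hy : 0 < y) :
    (x - y) * (p ^ 2 * s ^ 2 / x - q ^ 2 * t ^ 2 / y) - (p - q) * (p * s ^ 2 - q * t ^ 2)
      ≤ 1 / 2 * ((p ^ 2 + q ^ 2) * (t - s) ^ 2) := by
  have sos : 1 / 2 * ((p ^ 2 + q ^ 2) * (t - s) ^ 2)
      - ((x - y) * (p ^ 2 * s ^ 2 / x - q ^ 2 * t ^ 2 / y) - (p - q) * (p * s ^ 2 - q * t ^ 2))
      = 1 / 2 * ((p - q) * (t - s)) ^ 2 + (y * p * s - x * q * t) ^ 2 / (x * y) := by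
    field_simp
    ring
  have : 0 ≤ (y * p * s - x * q * t) ^ 2 / (x * y) := by positivity
  nlinarith [sq_nonneg ((p - q) * (t - s))]

section FiniteGroup

variable {G ι : Type*} [AddGroup G] [Fintype G] [Fintype ι]

def schrodinger (s : ι → G) (v f : G → ℝ) (n : G) : ℝ :=
  (∑ i, (2 * f n - f (n + s i) - f (n - s i))) + v n * f n

lemma sum_second_difference_mul (a : G) (f h : G → ℝ) :
    ∑ n, (2 * f n - f (n + a) - f (n - a)) * h n =
      ∑ n, (f n - f (n + a)) * (h n - h (n + a)) := by
  have hshift : ∑ n, (f n - f (n - a)) * h n = ∑ n, (f (n + a) - f n) * h (n + a) := by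
    rw [← Equiv.sum_comp (Equiv.addRight a)]
    simp only [Equiv.coe_addRight, add_sub_cancel_right]
  calc ∑ n, (2 * f n - f (n + a) - f (n - a)) * h n
      = ∑ n, (f n - f (n + a)) * h n + ∑ n, (f n - f (n - a)) * h n := by
        rw [← sum_add_distrib]
        exact sum_congr rfl fun n _ => by ring
    _ = ∑ n, (f n - f (n + a)) * (h n - h (n + a)) := by
        rw [hshift, ← sum_add_distrib]
        exact sum_congr rfl fun n _ => by ring

lemma sum_schrodinger_mul (s : ι → G) (v f h : G → ℝ) :
    ∑ n, schrodinger s v f n * h n =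
      ∑ i, ∑ n, (f n - f (n + s i)) * (h n - h (n + s i)) + ∑ n, v n * f n * h n := by
  simp only [schrodinger, add_mul, sum_mul, sum_add_distrib]
  rw [sum_comm]
  simp only [sum_second_difference_mul]

lemma sum_mul_sq_sub_shift (F g : G → ℝ) (a : G) :
    ∑ n, F n * ((g (n + a) - g n) ^ 2 + (g (n - a) - g n) ^ 2) =
      ∑ n, (F n + F (n + a)) * (g (n + a) - g n) ^ 2 := by
  have hshift : ∑ n, F n * (g (n - a) - g n) ^ 2 = ∑ n, F (n + a) * (g (n + a) - g n) ^ 2 := by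
    rw [← Equiv.sum_comp (Equiv.addRight a)]
    refine sum_congr rfl fun n _ => ?_
    simp only [Equiv.coe_addRight, add_sub_cancel_right]
    ring
  simp only [mul_add, sum_add_distrib, hshift, add_mul]

theorem schrodinger_caccioppoli (s : ι → G) (v u φ g : G → ℝ) (μ : ℝ)
    (hupos : ∀ n, 0 < u n) (hu : ∀ n, schrodinger s v u n = 1)
    (heig : ∀ n, schrodinger s v φ n = μ * φ n) :
    ∑ n, (1 / u n - μ) * φ n ^ 2 * g n ^ 2 ≤
      1 / 2 * ∑ n, φ n ^ 2 * ∑ i, ((g (n + s i) - g n) ^ 2 + (g (n - s i) - g n) ^ 2) := by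
  set w : G → ℝ := fun n => φ n ^ 2 * g n ^ 2 / u n
  set ψ : G → ℝ := fun n => φ n * g n ^ 2
  have hlhs : ∑ n, (1 / u n - μ) * φ n ^ 2 * g n ^ 2 =
      ∑ n, schrodinger s v u n * w n - ∑ n, schrodinger s v φ n * ψ n := by
    rw [← sum_sub_distrib]
    refine sum_congr rfl fun n _ => ?_
    have := (hupos n).ne'
    rw [hu, heig]
    simp only [w, ψ]
    field_simp
  have hpot : ∑ n, v n * u n * w n = ∑ n, v n * φ n * ψ n :=
    sum_congr rfl fun n _ => by
      have := (hupos n).ne'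
      simp only [w, ψ]
      field_simp
  have hrhs : 1 / 2 * ∑ n, φ n ^ 2 * ∑ i, ((g (n + s i) - g n) ^ 2 + (g (n - s i) - g n) ^ 2) =
      ∑ i, 1 / 2 * ∑ n, (φ n ^ 2 + φ (n + s i) ^ 2) * (g (n + s i) - g n) ^ 2 := by
    simp only [← sum_mul_sq_sub_shift, ← mul_sum]
    rw [sum_comm]
    simp only [mul_sum]
  rw [hlhs, sum_schrodinger_mul, sum_schrodinger_mul, hpot, add_sub_add_right_eq_sub, hrhs,
    ← sum_sub_distrib]
  gcongr with i
  rw [← sum_sub_distrib, mul_sum]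
  gcongr with n
  exact ground_state_edge_le _ _ _ _ _ _ (hupos n) (hupos (n + s i))

end FiniteGroup

theorem caccioppoli_inequality_general (d K : ℕ) [NeZero K]
    (v : (Fin d → ZMod K) → ℝ)
    (u : (Fin d → ZMod K) → ℝ) (hupos : ∀ n, 0 < u n)
    (hu : ∀ n, opH d K v u n = 1)
    (μ : ℝ) (φ : (Fin d → ZMod K) → ℝ)
    (heig : ∀ n, opH d K v φ n = μ * φ n)
    (g : (Fin d → ZMod K) → ℝ) :
    ∑ n : Fin d → ZMod K, (1 / u n - μ) * (φ n) ^ 2 * (g n) ^ 2 ≤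
      (1 / 2) * ∑ n : Fin d → ZMod K, (φ n) ^ 2 *
        ∑ i : Fin d,
          ((g (n + e d K i) - g n) ^ 2 + (g (n - e d K i) - g n) ^ 2) :=
  schrodinger_caccioppoli (e d K) v u φ g μ hupos hu heig

/-- Caccioppoli-type inequality: if `Hφ = μφ` and `Hu = 1`, then for any `g`,
`∑(1/u_n - μ)φ_n²g_n² ≤ (1/2)∑ φ_n² ∑_{|m-n|₁=1}(g_m - g_n)²`. -/
theorem caccioppoli_inequality (d K : ℕ) [NeZero K] (hK : 3 ≤ K)
    (v : (Fin d → ZMod K) → ℝ) (hv : ∀ n, 0 ≤ v n) (hv0 : ∃ n, v n ≠ 0)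
    (u : (Fin d → ZMod K) → ℝ) (hupos : ∀ n, 0 < u n)
    (hu : ∀ n, opH d K v u n = 1)
    (μ : ℝ) (φ : (Fin d → ZMod K) → ℝ) (hφ : φ ≠ 0)
    (heig : ∀ n, opH d K v φ n = μ * φ n)
    (g : (Fin d → ZMod K) → ℝ) :
    ∑ n : Fin d → ZMod K, (1 / u n - μ) * (φ n) ^ 2 * (g n) ^ 2 ≤
      (1 / 2) * ∑ n : Fin d → ZMod K, (φ n) ^ 2 *
        ∑ i : Fin d,
          ((g (n + e d K i) - g n) ^ 2 + (g (n - e d K i) - g n) ^ 2) :=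
  caccioppoli_inequality_general d K v u hupos hu μ φ heig g
end
end

section
/- Agmon decay estimate: let Hφ = μφ on ℓ²((Z/KZ)^d) with K ≥ 3, 0 ≤ v_n ≤ V_max, δ > 0 and 0 < μ ≤ V_max - δ. Let h_n be the Agmon distance to J_δ(μ) = {n : 1/u_n ≤ μ+δ} for the landscape function u. Then there is an absolute constant C > 0 such that for all 0 < α < 1/√(Cd), Σ_{h_n ≥ 1} e^{2αh_n} φ_n² ≤ (C_0/δ) Σ_{n∈M} φ_n², where C_0 = (4e^{2α}d + (2+6Cα²)e^{2α} d V_max)/(1 - Cdα²). -/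
attribute [local instance] Classical.propDecidable

open Finset Real

noncomputable section

/-- `m` and `n` are nearest neighbors on the torus: `|m - n|₁ = 1`. -/
def adj (d K : ℕ) (m n : Fin d → ZMod K) : Prop :=
  ∃ i : Fin d, m = n + e d K i ∨ m = n - e d K i

/-- The Agmon (semi-)metric associated to a weight `w`:
`ρ(n,m) = inf over unit-step paths γ from n to m of
  ∑_j ln(1 + √(min{w(γ_j), w(γ_{j+1})}))`. -/
def rho (d K : ℕ) (w : (Fin d → ZMod K) → ℝ) (n m : Fin d → ZMod K) : ℝ :=
  sInf {s : ℝ | ∃ (k : ℕ) (γ : ℕ → Fin d → ZMod K),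
    γ 0 = n ∧ γ k = m ∧ (∀ j < k, adj d K (γ (j + 1)) (γ j)) ∧
    s = ∑ j ∈ Finset.range k,
      Real.log (1 + Real.sqrt (min (w (γ j)) (w (γ (j + 1)))))}

/-- The Agmon distance to a region `J`: `h_n = inf_{m ∈ J} ρ(n, m)`. -/
def agmonDist (d K : ℕ) (w : (Fin d → ZMod K) → ℝ)
    (J : Set (Fin d → ZMod K)) (n : Fin d → ZMod K) : ℝ :=
  sInf {s : ℝ | ∃ m ∈ J, s = rho d K w n m}

/-!
The Agmon distance `h` is Lipschitz along every edge for the edge cost `log (1 + √(min w))`, so by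
Bernoulli's inequality `(1 + s) ^ α ≤ 1 + α s` the weight `F = e^{α h}` changes across an edge by
at most `α √w F`. Testing `Hu = 1` against `(Fφ)² / u` (discrete Picone inequality) bounds
`∑ (Fφ)² / u` by the energy of `Fφ`, and testing `Hφ = μφ` against `F²φ` shows that this energy is
`μ ∑ (Fφ)²` plus the edge sum `∑ φ φ' (F' - F)² ≤ α² d ∑ w F² φ²`. Hence
`∑ (1/u - μ - α² d w) F² φ² ≤ 0`. Off `J_δ(μ)` the coefficient is at least `(1 - α² d) δ`, while on
`J_δ(μ)` we have `F = 1` and the coefficient is at least `-(α² d δ + μ)`; so the estimate holds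
with `C = 1`.
-/

section SummationByParts

variable {G : Type*} [AddCommGroup G] [Fintype G]

theorem sum_second_diff_mul (c : G) (f g : G → ℝ) :
    ∑ n, (2 * f n - f (n + c) - f (n - c)) * g n
      = ∑ n, (f (n + c) - f n) * (g (n + c) - g n) := by
  have hshift : ∑ n, f (n - c) * g n = ∑ n, f n * g (n + c) := by
    rw [← Equiv.sum_comp (Equiv.addRight c)]
    simp
  have hdiag : ∑ n, f (n + c) * g (n + c) = ∑ n, f n * g n :=
    Equiv.sum_comp (Equiv.addRight c) fun n => f n * g n
  simp only [sub_mul, mul_sub, sum_sub_distrib, mul_assoc, ← mul_sum]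
  linarith

theorem sum_sum_add_shift {ι : Type*} [Fintype ι] (c : ι → G) (g : G → ℝ) :
    ∑ n, ∑ i, (g n + g (n + c i)) = 2 * Fintype.card ι * ∑ n, g n := by
  have hshift : ∀ i, ∑ n, g (n + c i) = ∑ n, g n := fun i => Equiv.sum_comp (Equiv.addRight (c i)) g
  rw [sum_comm]
  simp only [sum_add_distrib, hshift, sum_const, card_univ, nsmul_eq_mul]
  ring

end SummationByParts

section Landscape

variable {d K : ℕ} [NeZero K]

theorem sum_opH_mul (v f g : (Fin d → ZMod K) → ℝ) :
    ∑ n, opH d K v f n * g n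
      = ∑ n, ∑ i, (f (n + e d K i) - f n) * (g (n + e d K i) - g n)
        + ∑ n, v n * f n * g n := by
  simp only [opH, add_mul, sum_mul, sum_add_distrib]
  rw [sum_comm, sum_congr rfl fun i _ => sum_second_diff_mul (e d K i) f g, sum_comm]

theorem landscape_pos {v u : (Fin d → ZMod K) → ℝ} (hv : ∀ n, 0 ≤ v n)
    (hu : ∀ n, opH d K v u n = 1) (n : Fin d → ZMod K) : 0 < u n := by
  obtain ⟨n₀, -, hmin⟩ := exists_min_image univ u univ_nonempty
  have hlap : ∑ i, (2 * u n₀ - u (n₀ + e d K i) - u (n₀ - e d K i)) ≤ 0 :=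
    sum_nonpos fun i _ => by
      linarith [hmin (n₀ + e d K i) (mem_univ _), hmin (n₀ - e d K i) (mem_univ _)]
  have hvu : 0 < v n₀ * u n₀ := by
    have := hu n₀
    rw [opH] at this
    linarith
  exact (pos_of_mul_pos_right hvu (hv n₀)).trans_le (hmin n (mem_univ n))

theorem sub_mul_sq_div_sub_sq_div_le {a a' : ℝ} (x y : ℝ) (ha : 0 < a) (ha' : 0 < a') :
    (a' - a) * (y ^ 2 / a' - x ^ 2 / a) ≤ (y - x) ^ 2 := by
  have key : (y - x) ^ 2 - (a' - a) * (y ^ 2 / a' - x ^ 2 / a)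
      = (a * y - a' * x) ^ 2 / (a * a') := by
    field_simp
    ring
  linarith [key, show 0 ≤ (a * y - a' * x) ^ 2 / (a * a') by positivity]

theorem sum_sq_div_landscape_le {v u : (Fin d → ZMod K) → ℝ} (hu : ∀ n, opH d K v u n = 1)
    (hupos : ∀ n, 0 < u n) (ψ : (Fin d → ZMod K) → ℝ) :
    ∑ n, ψ n ^ 2 / u n
      ≤ ∑ n, ∑ i, (ψ (n + e d K i) - ψ n) ^ 2 + ∑ n, v n * ψ n ^ 2 := by
  have hgreen := sum_opH_mul v u fun n => ψ n ^ 2 / u n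
  have hpot : ∀ n, v n * u n * (ψ n ^ 2 / u n) = v n * ψ n ^ 2 := fun n => by
    field_simp [(hupos n).ne']
  simp only [hu, one_mul, hpot] at hgreen
  rw [hgreen]
  gcongr with n _ i _
  exact sub_mul_sq_div_sub_sq_div_le _ _ (hupos n) (hupos _)

theorem sum_opH_mul_sq_mul (v φ F : (Fin d → ZMod K) → ℝ) :
    ∑ n, opH d K v φ n * (F n ^ 2 * φ n)
      = ∑ n, ∑ i, (F (n + e d K i) * φ (n + e d K i) - F n * φ n) ^ 2
        + ∑ n, v n * (F n * φ n) ^ 2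
        - ∑ n, ∑ i, φ n * φ (n + e d K i) * (F (n + e d K i) - F n) ^ 2 := by
  rw [sum_opH_mul, add_sub_right_comm, ← sum_sub_distrib]
  congr 1
  · refine sum_congr rfl fun n _ => ?_
    rw [← sum_sub_distrib]
    exact sum_congr rfl fun i _ => by ring
  · exact sum_congr rfl fun n _ => by ring

theorem sum_inv_landscape_sub_mul_le {v u φ : (Fin d → ZMod K) → ℝ} {μ : ℝ}
    (hu : ∀ n, opH d K v u n = 1) (hupos : ∀ n, 0 < u n)
    (hφ : ∀ n, opH d K v φ n = μ * φ n) (F : (Fin d → ZMod K) → ℝ) :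
    ∑ n, (1 / u n - μ) * (F n ^ 2 * φ n ^ 2)
      ≤ ∑ n, ∑ i, φ n * φ (n + e d K i) * (F (n + e d K i) - F n) ^ 2 := by
  have hground := sum_sq_div_landscape_le hu hupos fun n => F n * φ n
  have hlocal := sum_opH_mul_sq_mul v φ F
  have heigen : ∑ n, opH d K v φ n * (F n ^ 2 * φ n) = μ * ∑ n, (F n * φ n) ^ 2 := by
    rw [mul_sum]
    exact sum_congr rfl fun n _ => by rw [hφ]; ring
  have hsplit : ∑ n, (1 / u n - μ) * (F n ^ 2 * φ n ^ 2)
      = ∑ n, (F n * φ n) ^ 2 / u n - μ * ∑ n, (F n * φ n) ^ 2 := by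
    rw [mul_sum, ← sum_sub_distrib]
    exact sum_congr rfl fun n _ => by ring
  linarith

end Landscape

section ExponentialWeight

theorem exp_mul_log_one_add_le {α s : ℝ} (hs : 0 ≤ s) (hα0 : 0 ≤ α) (hα1 : α ≤ 1) :
    exp (α * log (1 + s)) ≤ 1 + α * s := by
  rw [mul_comm, ← rpow_def_of_pos (by linarith)]
  exact rpow_one_add_le_one_add_mul_self (by linarith) hα0 hα1

theorem exp_mul_sub_exp_mul_sq_le {α a b t : ℝ} (hα0 : 0 ≤ α) (hα1 : α ≤ 1) (ht : 0 ≤ t)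
    (hab : a ≤ b) (hba : b ≤ a + log (1 + √t)) :
    (exp (α * b) - exp (α * a)) ^ 2 ≤ α ^ 2 * t * exp (α * a) ^ 2 := by
  have hupper : exp (α * b) ≤ exp (α * a) * (1 + α * √t) := calc
    exp (α * b) ≤ exp (α * a + α * log (1 + √t)) := exp_le_exp.2 (by nlinarith)
    _ = exp (α * a) * exp (α * log (1 + √t)) := exp_add _ _
    _ ≤ exp (α * a) * (1 + α * √t) := by
      gcongr
      exact exp_mul_log_one_add_le (sqrt_nonneg t) hα0 hα1
  have hlower : exp (α * a) ≤ exp (α * b) := exp_le_exp.2 (by nlinarith)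
  calc (exp (α * b) - exp (α * a)) ^ 2 ≤ (exp (α * a) * (α * √t)) ^ 2 := by
        gcongr
        linarith
    _ = α ^ 2 * t * exp (α * a) ^ 2 := by rw [mul_pow, mul_pow, sq_sqrt ht]; ring

theorem exp_mul_sub_exp_mul_sq_le_min {α a b w w' : ℝ} (hα0 : 0 ≤ α) (hα1 : α ≤ 1)
    (hw : 0 ≤ w) (hw' : 0 ≤ w') (hab : |b - a| ≤ log (1 + √(min w w'))) :
    (exp (α * b) - exp (α * a)) ^ 2
      ≤ α ^ 2 * min (w * exp (α * a) ^ 2) (w' * exp (α * b) ^ 2) := by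
  wlog hle : a ≤ b generalizing a b w w'
  · rw [← neg_sub, neg_sq, min_comm]
    exact this hw' hw (by rwa [abs_sub_comm, min_comm]) (le_of_not_ge hle)
  have hexp : exp (α * a) ^ 2 ≤ exp (α * b) ^ 2 := by gcongr
  calc (exp (α * b) - exp (α * a)) ^ 2 ≤ α ^ 2 * (min w w' * exp (α * a) ^ 2) := by
        rw [← mul_assoc]
        exact exp_mul_sub_exp_mul_sq_le hα0 hα1 (le_min hw hw') hle
          (by linarith [le_abs_self (b - a)])
    _ ≤ α ^ 2 * min (w * exp (α * a) ^ 2) (w' * exp (α * b) ^ 2) := by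
        gcongr
        exact le_min (by gcongr; exact min_le_left _ _)
          (mul_le_mul (min_le_right _ _) hexp (sq_nonneg _) hw')

variable {d K : ℕ} [NeZero K]

theorem sum_edge_mul_exp_sub_sq_le {w h φ : (Fin d → ZMod K) → ℝ} {α : ℝ} (hα0 : 0 ≤ α)
    (hα1 : α ≤ 1) (hw : ∀ n, 0 ≤ w n)
    (hlip : ∀ n i, |h (n + e d K i) - h n| ≤ log (1 + √(min (w n) (w (n + e d K i))))) :
    ∑ n, ∑ i, φ n * φ (n + e d K i) * (exp (α * h (n + e d K i)) - exp (α * h n)) ^ 2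
      ≤ α ^ 2 * d * ∑ n, w n * exp (α * h n) ^ 2 * φ n ^ 2 := by
  calc _ ≤ ∑ n, ∑ i, α ^ 2 / 2 * (w n * exp (α * h n) ^ 2 * φ n ^ 2
          + w (n + e d K i) * exp (α * h (n + e d K i)) ^ 2 * φ (n + e d K i) ^ 2) := by
        refine sum_le_sum fun n _ => sum_le_sum fun i _ => ?_
        set n' := n + e d K i
        have hdiff := exp_mul_sub_exp_mul_sq_le_min hα0 hα1 (hw n) (hw n') (hlip n i)
        have hamgm : φ n * φ n' * (exp (α * h n') - exp (α * h n)) ^ 2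
            ≤ (φ n ^ 2 + φ n' ^ 2) / 2 * (exp (α * h n') - exp (α * h n)) ^ 2 :=
          mul_le_mul_of_nonneg_right (by nlinarith [sq_nonneg (φ n - φ n')]) (sq_nonneg _)
        have hleft : φ n ^ 2 * (exp (α * h n') - exp (α * h n)) ^ 2
            ≤ φ n ^ 2 * (α ^ 2 * (w n * exp (α * h n) ^ 2)) :=
          mul_le_mul_of_nonneg_left (hdiff.trans (by gcongr; exact min_le_left _ _)) (sq_nonneg _)
        have hright : φ n' ^ 2 * (exp (α * h n') - exp (α * h n)) ^ 2
            ≤ φ n' ^ 2 * (α ^ 2 * (w n' * exp (α * h n') ^ 2)) :=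
          mul_le_mul_of_nonneg_left (hdiff.trans (by gcongr; exact min_le_right _ _)) (sq_nonneg _)
        linear_combination hamgm + hleft / 2 + hright / 2
    _ = α ^ 2 * d * ∑ n, w n * exp (α * h n) ^ 2 * φ n ^ 2 := by
        simp only [← mul_sum]
        rw [sum_sum_add_shift (e d K) fun n => w n * exp (α * h n) ^ 2 * φ n ^ 2, Fintype.card_fin]
        ring

theorem sum_inv_landscape_sub_mul_exp_nonpos {v u φ h : (Fin d → ZMod K) → ℝ} {μ α : ℝ}
    (hu : ∀ n, opH d K v u n = 1) (hupos : ∀ n, 0 < u n) (hφ : ∀ n, opH d K v φ n = μ * φ n)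
    (hα0 : 0 ≤ α) (hα1 : α ≤ 1)
    (hlip : ∀ n i, |h (n + e d K i) - h n|
      ≤ log (1 + √(min (max (1 / u n - μ) 0) (max (1 / u (n + e d K i) - μ) 0)))) :
    ∑ n, (1 / u n - μ - α ^ 2 * d * max (1 / u n - μ) 0) * (exp (2 * α * h n) * φ n ^ 2)
      ≤ 0 := by
  have hagmon := sum_inv_landscape_sub_mul_le hu hupos hφ fun n => exp (α * h n)
  have hedges := sum_edge_mul_exp_sub_sq_le (φ := φ) hα0 hα1 (fun n => le_max_right _ 0) hlip
  have hsplit : ∑ n, (1 / u n - μ - α ^ 2 * d * max (1 / u n - μ) 0)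
        * (exp (2 * α * h n) * φ n ^ 2)
      = ∑ n, (1 / u n - μ) * (exp (α * h n) ^ 2 * φ n ^ 2)
        - α ^ 2 * d * ∑ n, max (1 / u n - μ) 0 * exp (α * h n) ^ 2 * φ n ^ 2 := by
    rw [mul_sum, ← sum_sub_distrib]
    refine sum_congr rfl fun n _ => ?_
    rw [show 2 * α * h n = α * h n + α * h n by ring, exp_add]
    ring
  linarith

end ExponentialWeight

theorem Real.sInf_le_add_sInf {S T : Set ℝ} {c : ℝ} (hc : 0 ≤ c) (hS : BddBelow S)
    (hST : S.Nonempty → T.Nonempty) (h : ∀ t ∈ T, ∃ s ∈ S, s ≤ c + t) :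
    sInf S ≤ c + sInf T := by
  rcases T.eq_empty_or_nonempty with rfl | hT
  · rw [Set.not_nonempty_iff_eq_empty.1 (mt hST Set.not_nonempty_empty), Real.sInf_empty]
    simpa using hc
  · rw [← sub_le_iff_le_add']
    refine le_csInf hT fun t ht => ?_
    obtain ⟨s, hs, hst⟩ := h t ht
    linarith [csInf_le hS hs]

section AgmonMetric

variable {d K : ℕ}

def agmonEdge (w : (Fin d → ZMod K) → ℝ) (a b : Fin d → ZMod K) : ℝ :=
  log (1 + √(min (w a) (w b)))

/-- The set whose infimum is, by definition, `rho d K w n m`. -/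
def agmonPaths (d K : ℕ) (w : (Fin d → ZMod K) → ℝ) (n m : Fin d → ZMod K) : Set ℝ :=
  {s : ℝ | ∃ (k : ℕ) (γ : ℕ → Fin d → ZMod K),
    γ 0 = n ∧ γ k = m ∧ (∀ j < k, adj d K (γ (j + 1)) (γ j)) ∧
    s = ∑ j ∈ range k, agmonEdge w (γ j) (γ (j + 1))}

variable {w : (Fin d → ZMod K) → ℝ} {J : Set (Fin d → ZMod K)} {n m : Fin d → ZMod K}

theorem agmonEdge_nonneg (w : (Fin d → ZMod K) → ℝ) (a b : Fin d → ZMod K) :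
    0 ≤ agmonEdge w a b :=
  log_nonneg (le_add_of_nonneg_right (sqrt_nonneg _))

theorem agmonEdge_comm (w : (Fin d → ZMod K) → ℝ) (a b : Fin d → ZMod K) :
    agmonEdge w a b = agmonEdge w b a := by
  rw [agmonEdge, agmonEdge, min_comm]

theorem adj_symm (h : adj d K m n) : adj d K n m := by
  obtain ⟨i, rfl | rfl⟩ := h
  · exact ⟨i, Or.inr (add_sub_cancel_right _ _).symm⟩
  · exact ⟨i, Or.inl (sub_add_cancel _ _).symm⟩

theorem nonneg_of_mem_agmonPaths {s : ℝ} (hs : s ∈ agmonPaths d K w n m) : 0 ≤ s := by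
  obtain ⟨k, γ, -, -, -, rfl⟩ := hs
  exact sum_nonneg fun j _ => agmonEdge_nonneg w _ _

theorem agmonEdge_add_mem_agmonPaths {m' : Fin d → ZMod K} {s : ℝ} (hadj : adj d K m n)
    (hs : s ∈ agmonPaths d K w m m') : agmonEdge w n m + s ∈ agmonPaths d K w n m' := by
  obtain ⟨k, γ, h0, hk, hγ, rfl⟩ := hs
  refine ⟨k + 1, fun | 0 => n | j + 1 => γ j, rfl, hk, ?_, ?_⟩
  · rintro (_ | j) hj
    · simpa [h0] using hadj
    · exact hγ j (by omega)
  · rw [sum_range_succ', add_comm, ← h0]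

theorem bddBelow_agmonPaths : BddBelow (agmonPaths d K w n m) :=
  ⟨0, fun _ => nonneg_of_mem_agmonPaths⟩

theorem rho_nonneg : 0 ≤ rho d K w n m :=
  Real.sInf_nonneg fun _ => nonneg_of_mem_agmonPaths

theorem rho_self : rho d K w n n = 0 :=
  le_antisymm (csInf_le bddBelow_agmonPaths ⟨0, fun _ => n, rfl, rfl, by simp, by simp⟩)
    rho_nonneg

theorem rho_le_agmonEdge_add (hadj : adj d K m n) (m' : Fin d → ZMod K) :
    rho d K w n m' ≤ agmonEdge w n m + rho d K w m m' :=
  Real.sInf_le_add_sInf (agmonEdge_nonneg w n m) bddBelow_agmonPaths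
    (fun ⟨_, hs⟩ => ⟨_, agmonEdge_add_mem_agmonPaths (adj_symm hadj) hs⟩)
    fun _ hs => ⟨_, agmonEdge_add_mem_agmonPaths hadj hs, le_rfl⟩

theorem bddBelow_rho_image : BddBelow {s : ℝ | ∃ m ∈ J, s = rho d K w n m} :=
  ⟨0, by rintro _ ⟨m, -, rfl⟩; exact rho_nonneg⟩

theorem agmonDist_nonneg : 0 ≤ agmonDist d K w J n :=
  Real.sInf_nonneg (by rintro _ ⟨m, -, rfl⟩; exact rho_nonneg)

theorem agmonDist_eq_zero_of_mem (hn : n ∈ J) : agmonDist d K w J n = 0 :=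
  le_antisymm ((csInf_le bddBelow_rho_image ⟨n, hn, rfl⟩).trans_eq rho_self) agmonDist_nonneg

theorem agmonDist_le_agmonEdge_add (hadj : adj d K m n) :
    agmonDist d K w J n ≤ agmonEdge w n m + agmonDist d K w J m :=
  Real.sInf_le_add_sInf (agmonEdge_nonneg w n m) bddBelow_rho_image
    (fun ⟨_, m', hm', _⟩ => ⟨_, m', hm', rfl⟩)
    (by rintro _ ⟨m', hm', rfl⟩; exact ⟨_, ⟨m', hm', rfl⟩, rho_le_agmonEdge_add hadj m'⟩)

theorem abs_agmonDist_sub_le (hadj : adj d K m n) :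
    |agmonDist d K w J m - agmonDist d K w J n| ≤ agmonEdge w n m := by
  have h₁ := agmonDist_le_agmonEdge_add (w := w) (J := J) hadj
  have h₂ := agmonDist_le_agmonEdge_add (w := w) (J := J) (adj_symm hadj)
  rw [agmonEdge_comm] at h₂
  exact abs_sub_le_iff.2 ⟨by linarith, by linarith⟩

end AgmonMetric

theorem sum_filter_lt_le_of_sum_nonpos {ι : Type*} [Fintype ι] {q G P : ι → ℝ} {κ δ M : ℝ}
    (hκ0 : 0 ≤ κ) (hκ1 : κ ≤ 1) (hδ : 0 < δ) (hM : 0 ≤ M) (hG : ∀ i, 0 ≤ G i)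
    (hP : ∀ i, 0 ≤ P i) (hq : ∀ i, -M ≤ q i) (hGP : ∀ i, q i ≤ δ → G i ≤ P i)
    (hsum : ∑ i, (q i - κ * max (q i) 0) * G i ≤ 0) :
    (1 - κ) * δ * ∑ i with δ < q i, G i ≤ (κ * δ + M) * ∑ i, P i := by
  rw [← sum_filter_add_sum_filter_not univ fun i => δ < q i] at hsum
  have hfar : (1 - κ) * δ * ∑ i with δ < q i, G i
      ≤ ∑ i with δ < q i, (q i - κ * max (q i) 0) * G i := by
    rw [mul_sum]
    refine sum_le_sum fun i hi => mul_le_mul_of_nonneg_right ?_ (hG i)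
    have hqi : δ < q i := (mem_filter.1 hi).2
    rw [max_eq_left (by linarith)]
    nlinarith
  have hnear : -((κ * δ + M) * ∑ i with ¬δ < q i, P i)
      ≤ ∑ i with ¬δ < q i, (q i - κ * max (q i) 0) * G i := by
    rw [mul_sum, ← sum_neg_distrib]
    refine sum_le_sum fun i hi => ?_
    have hqi : q i ≤ δ := not_lt.1 (mem_filter.1 hi).2
    have hcoef : -(κ * δ + M) ≤ q i - κ * max (q i) 0 := by
      have : max (q i) 0 ≤ δ := max_le hqi hδ.le
      nlinarith [hq i]
    calc -((κ * δ + M) * P i) ≤ -(κ * δ + M) * G i := by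
          nlinarith [hGP i hqi, mul_nonneg hκ0 hδ.le]
      _ ≤ (q i - κ * max (q i) 0) * G i := mul_le_mul_of_nonneg_right hcoef (hG i)
  have hsub : ∑ i with ¬δ < q i, P i ≤ ∑ i, P i :=
    sum_le_sum_of_subset_of_nonneg (filter_subset _ _) fun i _ _ => hP i
  have hκδM : 0 ≤ κ * δ + M := by positivity
  nlinarith [mul_le_mul_of_nonneg_left hsub hκδM]

theorem sq_mul_lt_one_of_lt_one_div_sqrt {α x : ℝ} (hα : 0 < α) (h : α < 1 / √x) :
    0 < x ∧ α ^ 2 * x < 1 := by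
  have hx : 0 < x := by
    by_contra! hx
    rw [sqrt_eq_zero'.2 hx, div_zero] at h
    linarith
  have hsqrt : α * √x < 1 := by rwa [lt_div_iff₀ (sqrt_pos.2 hx)] at h
  refine ⟨hx, ?_⟩
  calc α ^ 2 * x = (α * √x) ^ 2 := by rw [mul_pow, sq_sqrt hx.le]
    _ < 1 := pow_lt_one₀ (by positivity) hsqrt two_ne_zero

theorem add_le_agmon_numerator {α d δ μ V C : ℝ} (hC : 0 ≤ C) (hd : 1 ≤ d) (hαd : α ^ 2 * d ≤ 1)
    (hα : 0 ≤ α) (hδ : 0 < δ) (hV : 0 ≤ V) (hμV : μ ≤ V - δ) :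
    α ^ 2 * d * δ + μ ≤ 4 * exp (2 * α) * d + (2 + 6 * C * α ^ 2) * exp (2 * α) * d * V := by
  have hE : 1 ≤ exp (2 * α) * d := one_le_mul_of_one_le_of_one_le (one_le_exp (by positivity)) hd
  calc α ^ 2 * d * δ + μ ≤ V := by nlinarith
    _ ≤ exp (2 * α) * d * V := le_mul_of_one_le_left hV hE
    _ ≤ _ := by
      nlinarith [show 0 ≤ exp (2 * α) * d * V by positivity, show 0 ≤ exp (2 * α) * d by positivity,
        show 0 ≤ C * α ^ 2 * (exp (2 * α) * d * V) by positivity]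

/-- Agmon decay estimate (Theorem 1.1 / 2.8): there is an absolute constant
`C > 0` such that for all `0 < α < 1/√(Cd)`, any eigenpair `(μ, φ)` of
`H = -Δ + V` on `(Z/KZ)^d` (`K ≥ 3`, `0 ≤ v ≤ V_max`) with
`0 < μ ≤ V_max - δ` satisfies
`∑_{h_n ≥ 1} e^{2αh_n} φ_n² ≤ (C₀/δ) ∑_n φ_n²`, where
`C₀ = (4e^{2α}d + (2 + 6Cα²)e^{2α} d V_max)/(1 - Cdα²)` and `h` is the Agmon
distance to `J_δ(μ) = {n : 1/u_n ≤ μ + δ}` for the landscape function `u`. -/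
theorem agmon_decay :
    ∃ C : ℝ, 0 < C ∧
      ∀ (d K : ℕ) [NeZero K], 3 ≤ K →
      ∀ (Vmax : ℝ) (v u φ : (Fin d → ZMod K) → ℝ) (μ δ α : ℝ),
        0 < Vmax → (∀ n, 0 ≤ v n ∧ v n ≤ Vmax) → (∃ n, v n ≠ 0) →
        (∀ n, opH d K v u n = 1) →
        φ ≠ 0 → (∀ n, opH d K v φ n = μ * φ n) →
        0 < δ → 0 < μ → μ ≤ Vmax - δ →
        0 < α → α < 1 / Real.sqrt (C * d) →
        ∑ n ∈ Finset.univ.filter (fun n : Fin d → ZMod K =>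
            1 ≤ agmonDist d K (fun p => max (1 / u p - μ) 0)
              {p : Fin d → ZMod K | 1 / u p ≤ μ + δ} n),
          Real.exp (2 * α * agmonDist d K (fun p => max (1 / u p - μ) 0)
              {p : Fin d → ZMod K | 1 / u p ≤ μ + δ} n) * (φ n) ^ 2 ≤
        ((4 * Real.exp (2 * α) * d +
            (2 + 6 * C * α ^ 2) * Real.exp (2 * α) * d * Vmax) /
          (1 - C * d * α ^ 2)) / δ *
          ∑ n : Fin d → ZMod K, (φ n) ^ 2 := by
  refine ⟨1, one_pos, ?_⟩
  intro d K _ _ Vmax v u φ μ δ α hV hv _ hu _ hφ hδ hμ hμV hα hαlt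
  rw [one_mul] at hαlt
  obtain ⟨hd, hαd⟩ := sq_mul_lt_one_of_lt_one_div_sqrt hα hαlt
  have hd1 : (1 : ℝ) ≤ d := Nat.one_le_cast.2 (Nat.cast_pos.1 hd)
  have hα1 : α ≤ 1 := by nlinarith
  have hupos := landscape_pos (fun n => (hv n).1) hu
  have hnonpos := sum_inv_landscape_sub_mul_exp_nonpos hu hupos hφ hα.le hα1
    fun n i => abs_agmonDist_sub_le (J := {p | 1 / u p ≤ μ + δ}) ⟨i, Or.inl rfl⟩
  set h := agmonDist d K (fun p => max (1 / u p - μ) 0) {p | 1 / u p ≤ μ + δ}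
  have hJ : ∀ n, 1 / u n - μ ≤ δ → h n = 0 := fun n hn =>
    agmonDist_eq_zero_of_mem (show 1 / u n ≤ μ + δ by linarith)
  have hfar := sum_filter_lt_le_of_sum_nonpos (by positivity) hαd.le hδ hμ.le
    (fun n => by positivity) (fun n => sq_nonneg (φ n))
    (fun n => by linarith [one_div_pos.2 (hupos n)]) (fun n hn => by simp [hJ n hn]) hnonpos
  have hsub : (univ.filter fun n => 1 ≤ h n) ⊆ univ.filter fun n => δ < 1 / u n - μ := by
    intro n
    simp only [mem_filter, mem_univ, true_and]
    contrapose!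
    intro hn
    simp [hJ n hn]
  rw [div_div, div_mul_eq_mul_div, le_div_iff₀ (by nlinarith),
    show (1 : ℝ) * d * α ^ 2 = α ^ 2 * d by ring]
  calc _ ≤ (∑ n with δ < 1 / u n - μ, exp (2 * α * h n) * φ n ^ 2) * ((1 - α ^ 2 * d) * δ) := by
        gcongr
    _ ≤ (α ^ 2 * d * δ + μ) * ∑ n, φ n ^ 2 := by linarith
    _ ≤ _ := mul_le_mul_of_nonneg_right
        (add_le_agmon_numerator zero_le_one hd1 hαd.le hα.le hδ hV.le hμV)
        (sum_nonneg fun n _ => sq_nonneg (φ n))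
end
end

section
/- Duality of eigenpairs: let K be even, M = (Z/KZ)^d, and for φ ∈ ℓ²(M) define φ̃_n = (-1)^{s(n)} φ_n where s(n) = n_1 + ... + n_d. Then (μ, φ) is an eigenpair of H = -Δ + V if and only if (4d + V_max - μ, φ̃) is an eigenpair of the dual operator H̃ = -Δ + (V_max - V). -/
open Finset Real

noncomputable section

/-- The sign `(-1)^{s(n)}` where `s(n) = n_1 + ⋯ + n_d` (well defined on the
torus when `K` is even). -/
def sgn (d K : ℕ) (n : Fin d → ZMod K) : ℝ :=
  (-1 : ℝ) ^ (∑ i : Fin d, (n i).val)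

/-!
Multiplying by `(-1)^{s(n)}` anticommutes with nearest-neighbour hopping, because `n ± eᵢ`
and `n` have opposite parity of `s`. On the torus this needs `K` even: otherwise `s` jumps
by `K - 1` when a coordinate wraps around from `K - 1` to `0`. Conjugating
`-Δ = 2d - hopping` by the sign thus gives `4d + Δ`, so
`H̃ φ̃ = (-1)^{s} ((4d + V_max) φ - H φ)`, and the eigenvalue
equations correspond pointwise.
-/

theorem ZMod.even_val_add_one_iff {K : ℕ} (hK : Even K) (x : ZMod K) :
    Even (x + 1).val ↔ ¬Even x.val := by
  rcases eq_or_ne K 0 with rfl | hK0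
  · exact (Int.natAbs_even.trans Int.even_add_one).trans (not_congr Int.natAbs_even.symm)
  · have : NeZero K := ⟨hK0⟩
    have h2K : 2 ∣ K := even_iff_two_dvd.mp hK
    rw [ZMod.val_add, ZMod.val_one_eq_one_mod, ← Nat.even_add_one, Nat.even_iff, Nat.even_iff,
      Nat.mod_mod_of_dvd _ h2K, Nat.add_mod, Nat.mod_mod_of_dvd 1 h2K, ← Nat.add_mod]

theorem ZMod.neg_one_pow_val_add_one {R : Type*} [Monoid R] [HasDistribNeg R] {K : ℕ}
    (hK : Even K) (x : ZMod K) : (-1 : R) ^ (x + 1).val = -(-1) ^ x.val := by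
  rw [neg_one_pow_congr ((ZMod.even_val_add_one_iff hK x).trans Nat.even_add_one.symm),
    pow_succ, mul_neg_one]

section Duality

variable {d K : ℕ}

theorem sgn_add_e (hK : Even K) (n : Fin d → ZMod K) (i : Fin d) :
    sgn d K (n + e d K i) = -sgn d K n := by
  have h_off : ∑ j ∈ univ.erase i, ((n + e d K i) j).val = ∑ j ∈ univ.erase i, (n j).val :=
    sum_congr rfl fun j hj => by simp [e, ne_of_mem_erase hj]
  have h_at : (n + e d K i) i = n i + 1 := by simp [e]
  rw [sgn, sgn, ← add_sum_erase _ _ (mem_univ i),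
    ← add_sum_erase _ (fun j => (n j).val) (mem_univ i), h_off, h_at, pow_add, pow_add,
    ZMod.neg_one_pow_val_add_one hK, neg_mul]

theorem sgn_sub_e (hK : Even K) (n : Fin d → ZMod K) (i : Fin d) :
    sgn d K (n - e d K i) = -sgn d K n := by
  rw [← neg_neg (sgn d K (n - e d K i)), ← sgn_add_e hK, sub_add_cancel]

theorem sgn_ne_zero (n : Fin d → ZMod K) : sgn d K n ≠ 0 :=
  pow_ne_zero _ (by norm_num)

theorem opH_dual_sgn_mul (hK : Even K) (Vmax : ℝ) (v φ : (Fin d → ZMod K) → ℝ)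
    (n : Fin d → ZMod K) :
    opH d K (fun p => Vmax - v p) (fun p => sgn d K p * φ p) n =
      sgn d K n * ((4 * d + Vmax) * φ n - opH d K v φ n) := by
  have h_term : ∀ i, 2 * (sgn d K n * φ n) - sgn d K (n + e d K i) * φ (n + e d K i)
      - sgn d K (n - e d K i) * φ (n - e d K i)
      = sgn d K n * (4 * φ n) - sgn d K n * (2 * φ n - φ (n + e d K i) - φ (n - e d K i)) := by
    intro i
    rw [sgn_add_e hK, sgn_sub_e hK]
    ring
  simp only [opH, h_term, sum_sub_distrib, ← mul_sum, sum_const, card_univ, Fintype.card_fin,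
    nsmul_eq_mul]
  ring

end Duality

theorem dual_eigenpair_general (d K : ℕ) (hK : Even K)
    (Vmax : ℝ) (v : (Fin d → ZMod K) → ℝ)
    (μ : ℝ) (φ : (Fin d → ZMod K) → ℝ) :
    (∀ n, opH d K v φ n = μ * φ n) ↔
      (∀ n, opH d K (fun p => Vmax - v p) (fun p => sgn d K p * φ p) n =
        (4 * d + Vmax - μ) * (sgn d K n * φ n)) := by
  refine forall_congr' fun n => ?_
  rw [opH_dual_sgn_mul hK, mul_left_comm, mul_right_inj' (sgn_ne_zero n)]
  constructor <;> intro h <;> linarith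

/-- Duality of eigenpairs: for `K` even, `(μ, φ)` is an eigenpair of
`H = -Δ + V` iff `(4d + V_max - μ, φ̃)` is an eigenpair of the dual operator
`H̃ = -Δ + (V_max - V)`, where `φ̃_n = (-1)^{s(n)} φ_n`. -/
theorem dual_eigenpair (d K : ℕ) [NeZero K] (hK : Even K)
    (Vmax : ℝ) (v : (Fin d → ZMod K) → ℝ)
    (hv : ∀ n, 0 ≤ v n ∧ v n ≤ Vmax)
    (μ : ℝ) (φ : (Fin d → ZMod K) → ℝ) (hφ : φ ≠ 0) :
    (∀ n, opH d K v φ n = μ * φ n) ↔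
      (∀ n, opH d K (fun p => Vmax - v p) (fun p => sgn d K p * φ p) n =
        (4 * d + Vmax - μ) * (sgn d K n * φ n)) :=
  dual_eigenpair_general d K hK Vmax v μ φ
end
end
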